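/- arXiv:2403.12159 — 3 statements merged into one kernel-verified Lean document; each statement's English description precedes it below -/
import Mathlib

section
/- For all integers n ≥ 2, the sequence v satisfies v_n = v_{n-1} + v_{n-2} + F_{n+1}. -/
/-- The tiling-walking sequence of the (1×n)-board:
`v n = ∑_{k=0}^{⌊n/2⌋} C(n-k, k) * (n-k+1)`. -/
def v (n : ℕ) : ℕ := ∑ k ∈ Finset.range (n / 2 + 1), (n - k).choose k * (n - k + 1)

lemma fibsum (n : ℕ) : ∑ k ∈ Finset.range (n + 1), (n - k).choose k = Nat.fib (n + 1) := by
  rw [Nat.fib_succ_eq_sum_choose, Finset.Nat.sum_antidiagonal_eq_sum_range_succ_mk]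
  rw [← Finset.sum_range_reflect]
  apply Finset.sum_congr rfl
  intro k hk
  simp only [Finset.mem_range] at hk
  congr 1 <;> omega

lemma vext (n : ℕ) : v n = ∑ k ∈ Finset.range (n + 1), (n - k).choose k * (n - k + 1) := by
  rw [v]
  apply Finset.sum_subset
  · intro k hk; simp only [Finset.mem_range] at *; omega
  · intro k hk hk2
    simp only [Finset.mem_range] at hk hk2
    rw [Nat.choose_eq_zero_of_lt (by omega), zero_mul]


lemma key (n : ℕ) : v (n + 2) = v (n + 1) + v n + Nat.fib (n + 3) := by
  have hA : v (n + 2) = (∑ j ∈ Finset.range (n + 1),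
      (n + 1 - j).choose (j + 1) * (n + 2 - j)) + (n + 3) := by
    rw [vext]
    rw [show n + 2 + 1 = (n + 1) + 1 + 1 from rfl, Finset.sum_range_succ]
    rw [Nat.choose_eq_zero_of_lt (by omega), zero_mul, add_zero]
    rw [Finset.sum_range_succ']
    congr 1
    · apply Finset.sum_congr rfl
      intro j hj
      simp only [Finset.mem_range] at hj
      congr 2 <;> omega
    · simp
  have hsplit : ∀ j ∈ Finset.range (n + 1),
      (n + 1 - j).choose (j + 1) * (n + 2 - j)
      = ((n - j).choose (j + 1) + (n - j).choose j) * (n + 2 - j) := by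
    intro j hj
    simp only [Finset.mem_range] at hj
    have h1 : n + 1 - j = (n - j) + 1 := by omega
    rw [h1, Nat.choose_succ_succ']
    ring_nf
  have hA2 : v (n + 2) = (∑ j ∈ Finset.range (n + 1), (n - j).choose (j + 1) * (n + 2 - j))
      + (∑ j ∈ Finset.range (n + 1), (n - j).choose j * (n + 2 - j)) + (n + 3) := by
    rw [hA, Finset.sum_congr rfl hsplit]
    simp [add_mul, Finset.sum_add_distrib]
  have hB2 : ∑ j ∈ Finset.range (n + 1), (n - j).choose j * (n + 2 - j)
      = v n + Nat.fib (n + 1) := by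
    rw [vext, ← fibsum]
    rw [← Finset.sum_add_distrib]
    apply Finset.sum_congr rfl
    intro j hj
    simp only [Finset.mem_range] at hj
    have : n + 2 - j = (n - j + 1) + 1 := by omega
    rw [this]; ring
  have hB1 : ∑ j ∈ Finset.range (n + 1), (n - j).choose (j + 1) * (n + 2 - j)
      = (∑ j ∈ Finset.range (n + 1), (n - j).choose (j + 1) * (n + 1 - j))
        + ∑ j ∈ Finset.range (n + 1), (n - j).choose (j + 1) := by
    rw [← Finset.sum_add_distrib]
    apply Finset.sum_congr rfl
    intro j hj
    simp only [Finset.mem_range] at hj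
    have : n + 2 - j = (n + 1 - j) + 1 := by omega
    rw [this]; ring
  have hv1 : v (n + 1) = (∑ j ∈ Finset.range (n + 1), (n - j).choose (j + 1) * (n + 1 - j))
      + (n + 2) := by
    rw [vext, Finset.sum_range_succ']
    congr 1
    · apply Finset.sum_congr rfl
      intro j hj
      simp only [Finset.mem_range] at hj
      congr 2 <;> omega
    · simp
  have hC2 : (∑ j ∈ Finset.range (n + 1), (n - j).choose (j + 1)) + 1 = Nat.fib (n + 2) := by
    have hf : ∑ k ∈ Finset.range (n + 2), (n + 1 - k).choose k = Nat.fib (n + 2) := by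
      have := fibsum (n + 1); simpa using this
    rw [← hf, Finset.sum_range_succ' (fun k => (n + 1 - k).choose k) (n + 1)]
    simp only [Nat.sub_zero, Nat.choose_zero_right]
    congr 1
    apply Finset.sum_congr rfl
    intro j hj
    simp only [Finset.mem_range] at hj
    congr 1; omega
  have hfib : Nat.fib (n + 3) = Nat.fib (n + 1) + Nat.fib (n + 2) := by
    rw [show n + 3 = n + 1 + 2 from rfl, Nat.fib_add_two]
  omega

theorem stmt_3 : ∀ n : ℕ, 2 ≤ n →
    v n = v (n - 1) + v (n - 2) + Nat.fib (n + 1) := by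
  intro n hn
  obtain ⟨m, rfl⟩ : ∃ m, n = m + 2 := ⟨n - 2, by omega⟩
  simpa using key m
end

section
/- For all integers n ≥ 2, the sequence v satisfies v_n + v_{n-2} = (n+1)·F_{n+1}. -/
open Finset

lemma v_ext (n : ℕ) : v n = ∑ k ∈ range (n + 1), (n - k).choose k * (n - k + 1) := by
  apply Finset.sum_subset
  · apply range_subset_range.2; omega
  · intro k _ hk
    simp only [mem_range, not_lt] at hk
    have : (n - k).choose k = 0 := Nat.choose_eq_zero_of_lt (by omega)
    simp [this]

lemma fib_sum (n : ℕ) : ∑ k ∈ range (n + 1), (n - k).choose k = Nat.fib (n + 1) := by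
  induction n using Nat.strong_induction_on with
  | _ n ih =>
    match n with
    | 0 => simp
    | 1 => decide
    | (m+2) =>
      rw [Finset.sum_range_succ']
      have h1 : ∑ i ∈ range (m + 2), (m + 2 - (i + 1)).choose (i + 1)
          = ∑ i ∈ range (m + 2), ((m - i).choose i + (m - i).choose (i + 1)) := by
        apply Finset.sum_congr rfl
        intro i hi
        simp only [mem_range] at hi
        rcases Nat.lt_or_ge i (m + 1) with h | h
        · have e : m + 2 - (i + 1) = (m - i) + 1 := by omega
          rw [e, Nat.choose_succ_succ]
        · have e : i = m + 1 := by omega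
          subst e
          simp
      rw [h1, Finset.sum_add_distrib]
      have h2 : ∑ i ∈ range (m + 2), (m - i).choose i = Nat.fib (m + 1) := by
        rw [Finset.sum_range_succ]
        have : (m - (m + 1)).choose (m + 1) = 0 := by
          have : m - (m + 1) = 0 := by omega
          simp [this]
        rw [this, add_zero]
        exact ih m (by omega)
      have h3 : (∑ i ∈ range (m + 1), (m - i).choose (i + 1)) + 1 = Nat.fib (m + 2) := by
        have h := ih (m + 1) (by omega)
        rw [Finset.sum_range_succ'] at h
        have e : ∑ i ∈ range (m + 1), (m + 1 - (i + 1)).choose (i + 1)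
            = ∑ i ∈ range (m + 1), (m - i).choose (i + 1) := by
          apply Finset.sum_congr rfl
          intro i _
          congr 1
          omega
        rw [e] at h
        simp only [Nat.sub_zero, Nat.choose_zero_right] at h
        exact h
      have h4 : ∑ i ∈ range (m + 2), (m - i).choose (i + 1)
          = ∑ i ∈ range (m + 1), (m - i).choose (i + 1) := by
        rw [Finset.sum_range_succ]
        have : m - (m + 1) = 0 := by omega
        simp [this]
      rw [h2, h4]
      simp only [Nat.sub_zero, Nat.choose_zero_right]
      rw [show m + 2 + 1 = (m + 1) + 2 from rfl, Nat.fib_add_two,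
        show m + 1 + 1 = m + 2 from rfl]
      omega

lemma g_eq (m : ℕ) : ∑ k ∈ range (m + 3), k * (m + 2 - k).choose k
    = ∑ j ∈ range (m + 1), (m - j).choose j * (m - j + 1) := by
  rw [Finset.sum_range_succ']
  simp only [zero_mul, add_zero]
  have h1 : ∑ i ∈ range (m + 2), (i + 1) * (m + 2 - (i + 1)).choose (i + 1)
      = ∑ i ∈ range (m + 2), (m - i).choose i * (m - i + 1) := by
    apply Finset.sum_congr rfl
    intro i hi
    simp only [mem_range] at hi
    rcases Nat.lt_or_ge i (m + 1) with h | h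
    · have e : m + 2 - (i + 1) = (m - i) + 1 := by omega
      rw [e]
      have := Nat.add_one_mul_choose_eq (m - i) i
      -- succ (m-i) * choose (m-i) i = choose (succ (m-i)) (succ i) * succ i
      calc (i + 1) * ((m - i) + 1).choose (i + 1)
          = ((m - i) + 1).choose (i + 1) * (i + 1) := by ring
        _ = ((m - i) + 1) * (m - i).choose i := this.symm
        _ = (m - i).choose i * (m - i + 1) := by ring
    · have e : i = m + 1 := by omega
      subst e
      have e1 : m + 2 - (m + 1 + 1) = 0 := by omega
      have e2 : m - (m + 1) = 0 := by omega
      simp [e1, e2]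
  rw [h1, Finset.sum_range_succ]
  have : m - (m + 1) = 0 := by omega
  simp [this]

theorem stmt_4 : ∀ n : ℕ, 2 ≤ n →
    v n + v (n - 2) = (n + 1) * Nat.fib (n + 1) := by
  intro n hn
  obtain ⟨m, rfl⟩ : ∃ m, n = m + 2 := ⟨n - 2, by omega⟩
  rw [v_ext, v_ext]
  simp only [Nat.add_sub_cancel]
  have key : (∑ k ∈ range (m + 3), (m + 2 - k).choose k * (m + 2 - k + 1))
      + (∑ k ∈ range (m + 3), k * (m + 2 - k).choose k)
      = (m + 3) * Nat.fib (m + 3) := by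
    rw [← Finset.sum_add_distrib, ← fib_sum (m + 2), Finset.mul_sum]
    apply Finset.sum_congr rfl
    intro k hk
    simp only [mem_range] at hk
    have e : m + 2 - k + 1 + k = m + 3 := by omega
    calc (m + 2 - k).choose k * (m + 2 - k + 1) + k * (m + 2 - k).choose k
        = (m + 2 - k).choose k * ((m + 2 - k + 1) + k) := by ring
      _ = (m + 3) * (m + 2 - k).choose k := by rw [e]; ring
  rw [show m + 2 + 1 = m + 3 from rfl, ← g_eq m]
  exact key
end

section
/- For all integers n ≥ 1, the sequence v satisfies 2·v_n - v_{n-1} = (n+2)·F_{n+1}. -/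
open Finset Nat

/-- Extended-range version of the Fibonacci sum. -/
def S (n : ℕ) : ℕ := ∑ k ∈ Finset.range (n + 1), (n - k).choose k

/-- Extended-range version of `v`. -/
def V (n : ℕ) : ℕ := ∑ k ∈ Finset.range (n + 1), (n - k).choose k * (n - k + 1)

lemma fib2 (i : ℕ) : Nat.fib (i + 2) = Nat.fib (i + 1) + Nat.fib i := by
  rw [Nat.fib_add_two, Nat.add_comm]

lemma S_eq_fib (n : ℕ) : S n = Nat.fib (n + 1) := by
  rw [Nat.fib_succ_eq_sum_choose, Finset.Nat.sum_antidiagonal_eq_sum_range_succ_mk, S,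
    ← Finset.sum_range_reflect]
  apply Finset.sum_congr rfl
  intro k hk
  simp only [Finset.mem_range] at hk
  simp only [Nat.add_sub_cancel]
  rw [Nat.sub_sub_self (by omega)]

lemma v_eq_V (n : ℕ) : v n = V n := by
  rw [v, V]
  apply Finset.sum_subset
  · intro k hk
    simp only [Finset.mem_range] at *
    omega
  · intro k hk hk'
    simp only [Finset.mem_range] at *
    have : n - k < k := by omega
    rw [Nat.choose_eq_zero_of_lt this, zero_mul]

lemma V_rec (n : ℕ) : V (n + 2) = V (n + 1) + V n + Nat.fib (n + 3) := by
  have h1 : V (n + 2) =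
      (∑ k ∈ range (n + 2), (n - k).choose (k + 1) * (n + 1 - k))
      + (∑ k ∈ range (n + 2), (n - k).choose (k + 1))
      + (∑ k ∈ range (n + 2), (n - k).choose k * (n - k + 1))
      + (∑ k ∈ range (n + 2), (n - k).choose k)
      + (n + 3) := by
    rw [V, Finset.sum_range_succ']
    have hpt : ∀ k ∈ range (n + 2),
        (n + 2 - (k + 1)).choose (k + 1) * (n + 2 - (k + 1) + 1)
        = (n - k).choose (k + 1) * (n + 1 - k) + (n - k).choose (k + 1)
          + ((n - k).choose k * (n - k + 1) + (n - k).choose k) := by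
      intro k hk
      simp only [Finset.mem_range] at hk
      have e1 : n + 2 - (k + 1) = n + 1 - k := by omega
      rw [e1]
      rcases le_or_gt k n with h | h
      · have e2 : n + 1 - k = (n - k) + 1 := by omega
        rw [e2, Nat.choose_succ_succ]
        ring
      · have e5 : n + 1 - k = 0 := by omega
        have e6 : n - k = 0 := by omega
        rw [e5, e6, Nat.choose_eq_zero_of_lt (show (0:ℕ) < k + 1 by omega),
          Nat.choose_eq_zero_of_lt (show (0:ℕ) < k by omega)]
    rw [Finset.sum_congr rfl hpt]
    rw [Finset.sum_add_distrib, Finset.sum_add_distrib, Finset.sum_add_distrib]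
    simp only [Nat.sub_zero, Nat.choose_zero_right, one_mul]
    ring
  have h2 : V (n + 1) = (∑ k ∈ range (n + 2), (n - k).choose (k + 1) * (n + 1 - k)) + (n + 2) := by
    rw [V, Finset.sum_range_succ']
    rw [Finset.sum_range_succ (fun k => (n - k).choose (k + 1) * (n + 1 - k))]
    have : (n - (n + 1)).choose (n + 1 + 1) * (n + 1 - (n + 1)) = 0 := by
      simp
    rw [this, add_zero]
    have hpt : ∀ k ∈ range (n + 1),
        (n + 1 - (k + 1)).choose (k + 1) * (n + 1 - (k + 1) + 1)
        = (n - k).choose (k + 1) * (n + 1 - k) := by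
      intro k hk
      simp only [Finset.mem_range] at hk
      have e1 : n + 1 - (k + 1) = n - k := by omega
      have e2 : n - k + 1 = n + 1 - k := by omega
      rw [e1, e2]
    rw [Finset.sum_congr rfl hpt]
    simp
  have h3 : S (n + 1) = (∑ k ∈ range (n + 2), (n - k).choose (k + 1)) + 1 := by
    rw [S, Finset.sum_range_succ']
    rw [Finset.sum_range_succ (fun k => (n - k).choose (k + 1))]
    have : (n - (n + 1)).choose (n + 1 + 1) = 0 := by simp
    rw [this, add_zero]
    have hpt : ∀ k ∈ range (n + 1),
        (n + 1 - (k + 1)).choose (k + 1) = (n - k).choose (k + 1) := by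
      intro k hk
      congr 1
      omega
    rw [Finset.sum_congr rfl hpt]
    simp
  have h4 : (∑ k ∈ range (n + 2), (n - k).choose k * (n - k + 1)) = V n := by
    rw [V, Finset.sum_range_succ]
    simp
  have h5 : (∑ k ∈ range (n + 2), (n - k).choose k) = S n := by
    rw [S, Finset.sum_range_succ]
    simp
  have hs1 := S_eq_fib n
  have hs2 := S_eq_fib (n + 1)
  have hfx : Nat.fib (n + 1 + 1) = Nat.fib (n + 2) := rfl
  rw [hfx] at hs2
  have hf : Nat.fib (n + 3) = Nat.fib (n + 2) + Nat.fib (n + 1) := fib2 (n + 1)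
  omega

lemma closed (n : ℕ) : 5 * V n = (3 * n + 5) * Nat.fib (n + 1) + (n + 1) * Nat.fib n := by
  induction n using Nat.twoStepInduction with
  | zero => simp [V]
  | one => simp [V, Finset.sum_range_succ]
  | more n ih1 ih2 =>
    have hfx : n + 1 + 1 = n + 2 := rfl
    rw [hfx] at ih2
    rw [V_rec]
    have hf3 : Nat.fib (n + 3) = Nat.fib (n + 2) + Nat.fib (n + 1) := fib2 (n + 1)
    have hf2 : Nat.fib (n + 2) = Nat.fib (n + 1) + Nat.fib n := fib2 n
    rw [Nat.mul_add, Nat.mul_add, ih1, ih2, hf3, hf2]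
    ring

theorem stmt_5 : ∀ n : ℕ, 1 ≤ n →
    2 * (v n : ℤ) - v (n - 1) = (n + 2) * Nat.fib (n + 1) := by
  intro n hn
  obtain ⟨m, rfl⟩ : ∃ m, n = m + 1 := ⟨n - 1, by omega⟩
  simp only [Nat.add_sub_cancel]
  have c1 : (5 : ℤ) * V (m + 1) = (3 * ((m : ℤ) + 1) + 5) * Nat.fib (m + 1 + 1) + (((m : ℤ) + 1) + 1) * Nat.fib (m + 1) := by
    exact_mod_cast closed (m + 1)
  have e : m + 1 + 1 = m + 2 := rfl
  rw [e] at c1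
  have c2 : (5 : ℤ) * V m = (3 * (m : ℤ) + 5) * Nat.fib (m + 1) + ((m : ℤ) + 1) * Nat.fib m := by
    exact_mod_cast closed m
  have f : (Nat.fib (m + 2) : ℤ) = Nat.fib (m + 1) + Nat.fib m := by
    exact_mod_cast fib2 m
  rw [v_eq_V, v_eq_V]
  have h5 : (5 : ℤ) * (2 * (V (m + 1) : ℤ) - V m) = 5 * ((↑(m + 1) + 2) * Nat.fib (m + 1 + 1)) := by
    push_cast
    linear_combination 2 * c1 - c2 + ((m : ℤ) + 1) * f
  have := mul_left_cancel₀ (by norm_num : (5 : ℤ) ≠ 0) h5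
  exact this
end
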